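/- For all words σ, τ ∈ Ω, one has ξ^{-1} ‖φ'_σ‖ ‖φ'_τ‖ ≤ ‖φ'_{στ}‖ ≤ ‖φ'_σ‖ ‖φ'_τ‖. -/

import Mathlib

open MeasureTheory Filter Metric

noncomputable section

/-- A cookie-cutter system on `J = [0,1]`. -/
structure CookieCutter where
  N : ℕ
  hN : 2 ≤ N
  Jsub : Fin N → Set ℝ
  f : ℝ → ℝ
  φ : Fin N → ℝ → ℝ
  c : ℝ
  γ : ℝ
  b : ℝ
  B : ℝ
  hJsub_sub : ∀ j, Jsub j ⊆ Set.Icc 0 1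
  hJsub_interval : ∀ j, ∃ u v : ℝ, u ≤ v ∧ Jsub j = Set.Icc u v
  hJsub_disj : ∀ i j, i ≠ j → Disjoint (Jsub i) (Jsub j)
  hbij : ∀ j, Set.BijOn f (Jsub j) (Set.Icc 0 1)
  hφ_maps : ∀ j, ∀ x ∈ Set.Icc (0:ℝ) 1, φ j x ∈ Jsub j
  hφ_rinv : ∀ j, ∀ x ∈ Set.Icc (0:ℝ) 1, f (φ j x) = x
  hφ_linv : ∀ j, ∀ x ∈ Jsub j, φ j (f x) = x
  hfdiff : ∀ j, ∀ x ∈ Jsub j, DifferentiableAt ℝ f x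
  hφdiff : ∀ j, ∀ x ∈ Set.Icc (0:ℝ) 1, DifferentiableAt ℝ (φ j) x
  hc : 0 < c
  hγ : γ ∈ Set.Ioc (0:ℝ) 1
  hHolder : ∀ j, ∀ x ∈ Jsub j, ∀ y ∈ Jsub j, |deriv f x - deriv f y| ≤ c * |x - y| ^ γ
  hb : IsGLB ((fun x => |deriv f x|) '' ⋃ j, Jsub j) b
  hB : IsLUB ((fun x => |deriv f x|) '' ⋃ j, Jsub j) B
  hb1 : 1 < b

namespace CookieCutter

variable (cc : CookieCutter)

/-- `φ_σ = φ_{σ_1} ∘ ⋯ ∘ φ_{σ_n}` for a word `σ`. -/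
def wordMap : List (Fin cc.N) → ℝ → ℝ
  | [] => id
  | j :: rest => cc.φ j ∘ wordMap rest

/-- The basic interval `J_σ = φ_σ(J)`. -/
def Jc (σ : List (Fin cc.N)) : Set ℝ := cc.wordMap σ '' Set.Icc 0 1

/-- The diameter `|J_σ|`. -/
def diamJ (σ : List (Fin cc.N)) : ℝ := Metric.diam (cc.Jc σ)

/-- `‖φ'_σ‖ = sup_{x ∈ J} |φ'_σ(x)|`. -/
def φnorm (σ : List (Fin cc.N)) : ℝ :=
  sSup ((fun x => |deriv (cc.wordMap σ) x|) '' Set.Icc 0 1)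

/-- The distortion constant `ξ = exp (c / (b^γ − 1))`. -/
def xi : ℝ := Real.exp (cc.c / (cc.b ^ cc.γ - 1))

/-- The cookie-cutter set `E = ⋂_{n ≥ 1} ⋃_{σ ∈ Ω_n} J_σ`. -/
def E : Set ℝ := ⋂ (n : ℕ) (_ : 1 ≤ n), ⋃ σ : Fin n → Fin cc.N, cc.Jc (List.ofFn σ)

/-- `η = ξ^{9h}`. -/
def eta (h : ℝ) : ℝ := cc.xi ^ ((9:ℝ) * h)

/-- `L = η³ ξ^{3h}`. -/
def Lconst (h : ℝ) : ℝ := (cc.eta h) ^ 3 * cc.xi ^ ((3:ℝ) * h)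

/-- A Gibbs-like measure for the cookie-cutter system: a Borel probability measure
supported on `E` with `η⁻¹|J_σ|^h ≤ μ(J_σ) ≤ η|J_σ|^h` for every word `σ`. -/
def IsGibbsLike (μ : Measure ℝ) (h : ℝ) : Prop :=
  IsProbabilityMeasure μ ∧ μ (cc.Eᶜ) = 0 ∧
    ∀ σ : List (Fin cc.N), σ ≠ [] →
      (cc.eta h)⁻¹ * cc.diamJ σ ^ h ≤ (μ (cc.Jc σ)).toReal ∧
      (μ (cc.Jc σ)).toReal ≤ cc.eta h * cc.diamJ σ ^ h

/-- A finite maximal antichain in `Ω`. -/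
def IsFMA (Γ : Finset (List (Fin cc.N))) : Prop :=
  (∀ σ ∈ Γ, σ ≠ []) ∧
  (∀ ω : ℕ → Fin cc.N, ∃ k : ℕ, 1 ≤ k ∧ (List.ofFn fun i : Fin k => ω i) ∈ Γ) ∧
  ∀ σ ∈ Γ, ∀ τ ∈ Γ, σ <+: τ → σ = τ

end CookieCutter

/-- The `n`-th quantization error of order `r`. -/
def Vnr (μ : Measure ℝ) (n : ℕ) (r : ℝ) : ℝ :=
  sInf ((fun α : Finset ℝ => ∫ x, Metric.infDist x (α : Set ℝ) ^ r ∂μ) ''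
    {α : Finset ℝ | α.Nonempty ∧ α.card ≤ n})

/-- The auxiliary quantization error `u_{n,r}` with `U = (0,1)`. -/
def unr (μ : Measure ℝ) (n : ℕ) (r : ℝ) : ℝ :=
  sInf ((fun α : Finset ℝ =>
      ∫ x, Metric.infDist x ((α : Set ℝ) ∪ (Set.Ioo (0:ℝ) 1)ᶜ) ^ r ∂μ) ''
    {α : Finset ℝ | α.card ≤ n})



/-!
Bounded distortion: for `x, y ∈ J` one has `|φ'_σ(x)| ≤ ξ |φ'_σ(y)|`. Indeed
`log |φ'_σ|` is a sum over the letters of `σ` of `log |φ'_j|` evaluated along the orbit, and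
`log |φ'_j(u)| - log |φ'_j(v)| ≤ c |φ_j u - φ_j v|^γ` by the Hölder condition on `f'` and
`|f'| ≥ b > 1`. At depth `k` the two orbit points are `b^{-k}`-close, so the total is at most
`c ∑_{k ≥ 1} b^{-kγ} = c / (b^γ - 1) = log ξ`.
Given distortion, the chain rule `φ'_{στ}(x) = φ'_σ(φ_τ x) φ'_τ(x)` yields the upper bound at
once, and the lower bound because `|φ'_σ(φ_τ x)| ≥ ξ⁻¹ ‖φ'_σ‖` at every point.
-/

open Set

lemma Real.log_sub_log_le_abs_sub {a a' : ℝ} (ha : 0 < a) (ha' : 1 ≤ a') :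
    Real.log a - Real.log a' ≤ |a - a'| := by
  have ha'_pos : 0 < a' := one_pos.trans_le ha'
  calc Real.log a - Real.log a' = Real.log (a / a') := (Real.log_div ha.ne' ha'_pos.ne').symm
    _ ≤ a / a' - 1 := Real.log_le_sub_one_of_pos (div_pos ha ha'_pos)
    _ = (a - a') / a' := by field_simp
    _ ≤ |a - a'| / a' := by gcongr; exact le_abs_self _
    _ ≤ |a - a'| := div_le_self (abs_nonneg _) ha'

namespace CookieCutter

variable (cc : CookieCutter)

lemma b_pos : 0 < cc.b := one_pos.trans cc.hb1

lemma xi_pos : 0 < cc.xi := Real.exp_pos _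

lemma one_lt_b_rpow_γ : 1 < cc.b ^ cc.γ :=
  Real.one_lt_rpow cc.hb1 cc.hγ.1

lemma le_abs_deriv_f {j : Fin cc.N} {y : ℝ} (hy : y ∈ cc.Jsub j) : cc.b ≤ |deriv cc.f y| :=
  cc.hb.1 ⟨y, mem_iUnion.2 ⟨j, hy⟩, rfl⟩

lemma φ_mem_Icc (j : Fin cc.N) {x : ℝ} (hx : x ∈ Icc (0 : ℝ) 1) : cc.φ j x ∈ Icc (0 : ℝ) 1 :=
  cc.hJsub_sub j (cc.hφ_maps j x hx)

/-- The identity `f ∘ φ_j = id` holds only on `J`, so it is differentiated within `J`. -/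
lemma deriv_f_φ_mul_deriv_φ (j : Fin cc.N) {x : ℝ} (hx : x ∈ Icc (0 : ℝ) 1) :
    deriv cc.f (cc.φ j x) * deriv (cc.φ j) x = 1 := by
  have hcomp : HasDerivWithinAt (cc.f ∘ cc.φ j) (deriv cc.f (cc.φ j x) * deriv (cc.φ j) x)
      (Icc 0 1) x :=
    ((cc.hfdiff j _ (cc.hφ_maps j x hx)).hasDerivAt.comp x
      (cc.hφdiff j x hx).hasDerivAt).hasDerivWithinAt
  have hid : HasDerivWithinAt (cc.f ∘ cc.φ j) 1 (Icc 0 1) x :=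
    (hasDerivWithinAt_id x _).congr (fun y hy => cc.hφ_rinv j y hy) (cc.hφ_rinv j x hx)
  exact (uniqueDiffOn_Icc one_pos x hx).eq_deriv _ hcomp hid

lemma abs_deriv_φ (j : Fin cc.N) {x : ℝ} (hx : x ∈ Icc (0 : ℝ) 1) :
    |deriv (cc.φ j) x| = |deriv cc.f (cc.φ j x)|⁻¹ :=
  eq_inv_of_mul_eq_one_left (by rw [← abs_mul, mul_comm, cc.deriv_f_φ_mul_deriv_φ j hx, abs_one])

lemma abs_deriv_φ_pos (j : Fin cc.N) {x : ℝ} (hx : x ∈ Icc (0 : ℝ) 1) :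
    0 < |deriv (cc.φ j) x| := by
  rw [cc.abs_deriv_φ j hx]
  exact inv_pos.2 (cc.b_pos.trans_le (cc.le_abs_deriv_f (cc.hφ_maps j x hx)))

lemma abs_deriv_φ_le (j : Fin cc.N) {x : ℝ} (hx : x ∈ Icc (0 : ℝ) 1) :
    |deriv (cc.φ j) x| ≤ cc.b⁻¹ := by
  rw [cc.abs_deriv_φ j hx]
  exact inv_anti₀ cc.b_pos (cc.le_abs_deriv_f (cc.hφ_maps j x hx))

lemma abs_φ_sub_le (j : Fin cc.N) {u v : ℝ} (hu : u ∈ Icc (0 : ℝ) 1) (hv : v ∈ Icc (0 : ℝ) 1) :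
    |cc.φ j u - cc.φ j v| ≤ cc.b⁻¹ * |u - v| := by
  simpa only [Real.norm_eq_abs] using
    (convex_Icc (0 : ℝ) 1).norm_image_sub_le_of_norm_deriv_le (fun x hx => cc.hφdiff j x hx)
      (fun x hx => (Real.norm_eq_abs _).trans_le (cc.abs_deriv_φ_le j hx)) hv hu

lemma log_abs_deriv_φ_sub_le (j : Fin cc.N) {u v : ℝ} (hu : u ∈ Icc (0 : ℝ) 1)
    (hv : v ∈ Icc (0 : ℝ) 1) :
    Real.log |deriv (cc.φ j) u| - Real.log |deriv (cc.φ j) v|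
      ≤ cc.c * |cc.φ j u - cc.φ j v| ^ cc.γ := by
  have hpu := cc.hφ_maps j u hu
  have hpv := cc.hφ_maps j v hv
  rw [cc.abs_deriv_φ j hu, cc.abs_deriv_φ j hv, Real.log_inv, Real.log_inv, neg_sub_neg,
    abs_sub_comm (cc.φ j u)]
  calc Real.log |deriv cc.f (cc.φ j v)| - Real.log |deriv cc.f (cc.φ j u)|
      ≤ |(|deriv cc.f (cc.φ j v)| - |deriv cc.f (cc.φ j u)|)| :=
        Real.log_sub_log_le_abs_sub (cc.b_pos.trans_le (cc.le_abs_deriv_f hpv))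
          (cc.hb1.le.trans (cc.le_abs_deriv_f hpu))
    _ ≤ |deriv cc.f (cc.φ j v) - deriv cc.f (cc.φ j u)| := abs_abs_sub_abs_le_abs_sub _ _
    _ ≤ cc.c * |cc.φ j v - cc.φ j u| ^ cc.γ := cc.hHolder j _ hpv _ hpu

lemma wordMap_cons (j : Fin cc.N) (σ : List (Fin cc.N)) :
    cc.wordMap (j :: σ) = cc.φ j ∘ cc.wordMap σ := rfl

lemma wordMap_append (σ τ : List (Fin cc.N)) :
    cc.wordMap (σ ++ τ) = cc.wordMap σ ∘ cc.wordMap τ := by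
  induction σ with
  | nil => rfl
  | cons j σ ih => rw [List.cons_append, wordMap_cons, wordMap_cons, ih, Function.comp_assoc]

lemma wordMap_mem_Icc (σ : List (Fin cc.N)) {x : ℝ} (hx : x ∈ Icc (0 : ℝ) 1) :
    cc.wordMap σ x ∈ Icc (0 : ℝ) 1 := by
  induction σ with
  | nil => exact hx
  | cons j σ ih => exact cc.φ_mem_Icc j ih

lemma differentiableAt_wordMap (σ : List (Fin cc.N)) {x : ℝ} (hx : x ∈ Icc (0 : ℝ) 1) :
    DifferentiableAt ℝ (cc.wordMap σ) x := by
  induction σ with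
  | nil => exact differentiableAt_id
  | cons j σ ih => exact (cc.hφdiff j _ (cc.wordMap_mem_Icc σ hx)).comp x ih

lemma deriv_wordMap_append (σ τ : List (Fin cc.N)) {x : ℝ} (hx : x ∈ Icc (0 : ℝ) 1) :
    deriv (cc.wordMap (σ ++ τ)) x
      = deriv (cc.wordMap σ) (cc.wordMap τ x) * deriv (cc.wordMap τ) x := by
  rw [wordMap_append]
  exact deriv_comp x (cc.differentiableAt_wordMap σ (cc.wordMap_mem_Icc τ hx))
    (cc.differentiableAt_wordMap τ hx)

lemma deriv_wordMap_cons (j : Fin cc.N) (σ : List (Fin cc.N)) {x : ℝ}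
    (hx : x ∈ Icc (0 : ℝ) 1) :
    deriv (cc.wordMap (j :: σ)) x = deriv (cc.φ j) (cc.wordMap σ x) * deriv (cc.wordMap σ) x :=
  cc.deriv_wordMap_append [j] σ hx

lemma abs_deriv_wordMap_pos (σ : List (Fin cc.N)) {x : ℝ} (hx : x ∈ Icc (0 : ℝ) 1) :
    0 < |deriv (cc.wordMap σ) x| := by
  induction σ with
  | nil => simp [wordMap]
  | cons j σ ih =>
      rw [cc.deriv_wordMap_cons j σ hx, abs_mul]
      exact mul_pos (cc.abs_deriv_φ_pos j (cc.wordMap_mem_Icc σ hx)) ih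

lemma abs_wordMap_sub_le (σ : List (Fin cc.N)) {x y : ℝ} (hx : x ∈ Icc (0 : ℝ) 1)
    (hy : y ∈ Icc (0 : ℝ) 1) :
    |cc.wordMap σ x - cc.wordMap σ y| ≤ cc.b⁻¹ ^ σ.length := by
  induction σ with
  | nil => simpa [wordMap] using abs_sub_le_of_le_of_le hx.1 hx.2 hy.1 hy.2
  | cons j σ ih =>
      calc |cc.φ j (cc.wordMap σ x) - cc.φ j (cc.wordMap σ y)|
          ≤ cc.b⁻¹ * |cc.wordMap σ x - cc.wordMap σ y| :=
            cc.abs_φ_sub_le j (cc.wordMap_mem_Icc σ hx) (cc.wordMap_mem_Icc σ hy)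
        _ ≤ cc.b⁻¹ * cc.b⁻¹ ^ σ.length := by gcongr; exact inv_nonneg.2 cc.b_pos.le
        _ = cc.b⁻¹ ^ (j :: σ).length := by rw [List.length_cons, pow_succ']

/-- The letter added at depth `k` contributes at most `c (b^{-γ})^k`. -/
lemma log_abs_deriv_wordMap_sub_le (σ : List (Fin cc.N)) {x y : ℝ} (hx : x ∈ Icc (0 : ℝ) 1)
    (hy : y ∈ Icc (0 : ℝ) 1) :
    Real.log |deriv (cc.wordMap σ) x| - Real.log |deriv (cc.wordMap σ) y|
      ≤ cc.c * ∑ k ∈ Finset.Ico 1 (σ.length + 1), ((cc.b ^ cc.γ)⁻¹) ^ k := by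
  induction σ with
  | nil => simp [wordMap]
  | cons j σ ih =>
      have hux := cc.wordMap_mem_Icc σ hx
      have huy := cc.wordMap_mem_Icc σ hy
      have hstep : |cc.φ j (cc.wordMap σ x) - cc.φ j (cc.wordMap σ y)| ^ cc.γ
          ≤ ((cc.b ^ cc.γ)⁻¹) ^ (σ.length + 1) := by
        rw [← Real.inv_rpow cc.b_pos.le, Real.rpow_pow_comm (inv_nonneg.2 cc.b_pos.le)]
        exact Real.rpow_le_rpow (abs_nonneg _) (cc.abs_wordMap_sub_le (j :: σ) hx hy) cc.hγ.1.le
      rw [cc.deriv_wordMap_cons j σ hx, cc.deriv_wordMap_cons j σ hy, abs_mul, abs_mul,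
        Real.log_mul (cc.abs_deriv_φ_pos j hux).ne' (cc.abs_deriv_wordMap_pos σ hx).ne',
        Real.log_mul (cc.abs_deriv_φ_pos j huy).ne' (cc.abs_deriv_wordMap_pos σ hy).ne',
        List.length_cons, Finset.sum_Ico_succ_top (by omega), mul_add]
      linarith [cc.log_abs_deriv_φ_sub_le j hux huy, mul_le_mul_of_nonneg_left hstep cc.hc.le]

lemma geom_sum_b_rpow_γ_le (n : ℕ) :
    ∑ k ∈ Finset.Ico 1 n, ((cc.b ^ cc.γ)⁻¹) ^ k ≤ (cc.b ^ cc.γ - 1)⁻¹ := by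
  have hbγ := cc.one_lt_b_rpow_γ
  refine (geom_sum_Ico_le_of_lt_one (inv_nonneg.2 (one_pos.trans hbγ).le)
    (inv_lt_one_of_one_lt₀ hbγ)).trans_eq ?_
  field_simp [(sub_pos.2 hbγ).ne']

theorem abs_deriv_wordMap_le_xi_mul (σ : List (Fin cc.N)) {x y : ℝ} (hx : x ∈ Icc (0 : ℝ) 1)
    (hy : y ∈ Icc (0 : ℝ) 1) :
    |deriv (cc.wordMap σ) x| ≤ cc.xi * |deriv (cc.wordMap σ) y| := by
  have hlog : Real.log |deriv (cc.wordMap σ) x| - Real.log |deriv (cc.wordMap σ) y|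
      ≤ cc.c / (cc.b ^ cc.γ - 1) :=
    (cc.log_abs_deriv_wordMap_sub_le σ hx hy).trans
      (by rw [div_eq_mul_inv]; exact mul_le_mul_of_nonneg_left (cc.geom_sum_b_rpow_γ_le _) cc.hc.le)
  rw [xi, ← Real.exp_log (cc.abs_deriv_wordMap_pos σ hx),
    ← Real.exp_log (cc.abs_deriv_wordMap_pos σ hy), ← Real.exp_add]
  exact Real.exp_le_exp.2 (by linarith)

lemma bddAbove_abs_deriv_wordMap (σ : List (Fin cc.N)) :
    BddAbove ((fun x => |deriv (cc.wordMap σ) x|) '' Icc 0 1) :=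
  ⟨cc.xi * |deriv (cc.wordMap σ) 0|, by
    rintro _ ⟨x, hx, rfl⟩
    exact cc.abs_deriv_wordMap_le_xi_mul σ hx (left_mem_Icc.2 zero_le_one)⟩

lemma abs_deriv_wordMap_le_φnorm (σ : List (Fin cc.N)) {x : ℝ} (hx : x ∈ Icc (0 : ℝ) 1) :
    |deriv (cc.wordMap σ) x| ≤ cc.φnorm σ :=
  le_csSup (cc.bddAbove_abs_deriv_wordMap σ) ⟨x, hx, rfl⟩

lemma φnorm_pos (σ : List (Fin cc.N)) : 0 < cc.φnorm σ :=
  (cc.abs_deriv_wordMap_pos σ (left_mem_Icc.2 zero_le_one)).trans_le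
    (cc.abs_deriv_wordMap_le_φnorm σ (left_mem_Icc.2 zero_le_one))

lemma φnorm_le {M : ℝ} (σ : List (Fin cc.N))
    (h : ∀ x ∈ Icc (0 : ℝ) 1, |deriv (cc.wordMap σ) x| ≤ M) : cc.φnorm σ ≤ M :=
  csSup_le ((nonempty_Icc.2 zero_le_one).image _) (forall_mem_image.2 h)

lemma mul_φnorm_le {K M : ℝ} (hK : 0 < K) (σ : List (Fin cc.N))
    (h : ∀ x ∈ Icc (0 : ℝ) 1, K * |deriv (cc.wordMap σ) x| ≤ M) : K * cc.φnorm σ ≤ M := by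
  rw [← le_div_iff₀' hK]
  exact cc.φnorm_le σ fun x hx => (le_div_iff₀' hK).2 (h x hx)

lemma xi_inv_mul_φnorm_le (σ : List (Fin cc.N)) {y : ℝ} (hy : y ∈ Icc (0 : ℝ) 1) :
    cc.xi⁻¹ * cc.φnorm σ ≤ |deriv (cc.wordMap σ) y| := by
  rw [inv_mul_le_iff₀ cc.xi_pos]
  exact cc.φnorm_le σ fun x hx => cc.abs_deriv_wordMap_le_xi_mul σ hx hy

end CookieCutter

theorem norm_submultiplicative (cc : CookieCutter) :
    ∀ σ τ : List (Fin cc.N), σ ≠ [] → τ ≠ [] →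
      cc.xi⁻¹ * cc.φnorm σ * cc.φnorm τ ≤ cc.φnorm (σ ++ τ) ∧
      cc.φnorm (σ ++ τ) ≤ cc.φnorm σ * cc.φnorm τ := by
  intro σ τ _ _
  constructor
  · refine cc.mul_φnorm_le (mul_pos (inv_pos.2 cc.xi_pos) (cc.φnorm_pos σ)) τ fun x hx => ?_
    calc cc.xi⁻¹ * cc.φnorm σ * |deriv (cc.wordMap τ) x|
        ≤ |deriv (cc.wordMap σ) (cc.wordMap τ x)| * |deriv (cc.wordMap τ) x| := by
          gcongr; exact cc.xi_inv_mul_φnorm_le σ (cc.wordMap_mem_Icc τ hx)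
      _ = |deriv (cc.wordMap (σ ++ τ)) x| := by rw [cc.deriv_wordMap_append σ τ hx, abs_mul]
      _ ≤ cc.φnorm (σ ++ τ) := cc.abs_deriv_wordMap_le_φnorm _ hx
  · refine cc.φnorm_le (σ ++ τ) fun x hx => ?_
    rw [cc.deriv_wordMap_append σ τ hx, abs_mul]
    exact mul_le_mul (cc.abs_deriv_wordMap_le_φnorm σ (cc.wordMap_mem_Icc τ hx))
      (cc.abs_deriv_wordMap_le_φnorm τ hx) (abs_nonneg _) (cc.φnorm_pos σ).le
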